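/- (Laplace transform of I₀.) For all real p > a ≥ 0: ∫₀^∞ e^{−pλ}·I₀(aλ) dλ = 1/√(p² − a²). -/

import Mathlib

open MeasureTheory

/-- The modified Bessel function of order zero. -/
noncomputable def I0 (x : ℝ) : ℝ :=
  (1 / Real.pi) * ∫ θ in (0:ℝ)..Real.pi, Real.exp (x * Real.cos θ)

/-!
Writing `I₀(aλ)` as the average of `exp (aλ cos θ)` over `θ ∈ [0, π]` and exchanging the two
integrals (the integrand is dominated by `exp ((|a| - p) λ)`), the Laplace transform becomes
`π⁻¹ ∫₀^π (p - a cos θ)⁻¹ dθ`. On `(0, π)` this integrand has the antiderivative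
`arccos ((p cos θ - a) / (p - a cos θ)) / √(p² - a²)`, which is continuous on `[0, π]` and runs
from `arccos 1 = 0` to `arccos (-1) = π`.
-/

open Real Set

lemma mul_cos_le_abs (a θ : ℝ) : a * cos θ ≤ |a| :=
  calc a * cos θ ≤ |a * cos θ| := le_abs_self _
    _ = |a| * |cos θ| := abs_mul _ _
    _ ≤ |a| := mul_le_of_le_one_right (abs_nonneg a) (abs_cos_le_one θ)

lemma sub_mul_cos_pos {p a : ℝ} (h : |a| < p) (θ : ℝ) : 0 < p - a * cos θ := by
  linarith [mul_cos_le_abs a θ]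

lemma sq_sub_mul_cos_sub_sq (p a θ : ℝ) :
    (p - a * cos θ) ^ 2 - (p * cos θ - a) ^ 2 = (p ^ 2 - a ^ 2) * sin θ ^ 2 := by
  rw [sin_sq]; ring

lemma hasDerivAt_arccos_div_sub_mul_cos {p a : ℝ} (h : |a| < p) {θ : ℝ} (hθ : θ ∈ Ioo 0 π) :
    HasDerivAt (fun θ ↦ arccos ((p * cos θ - a) / (p - a * cos θ)) / √(p ^ 2 - a ^ 2))
      (p - a * cos θ)⁻¹ θ := by
  set D := p - a * cos θ with hD_def
  set u := (p * cos θ - a) / D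
  have hD : 0 < D := sub_mul_cos_pos h θ
  have hsq : 0 < p ^ 2 - a ^ 2 := by nlinarith [abs_nonneg a, sq_abs a]
  have hc2 := sq_sqrt hsq.le
  have hs : 0 < sin θ := sin_pos_of_pos_of_lt_pi hθ.1 hθ.2
  have h1u : 1 - u ^ 2 = (√(p ^ 2 - a ^ 2) * sin θ / D) ^ 2 := by
    simp only [u]
    field_simp
    linear_combination sq_sub_mul_cos_sub_sq p a θ - sin θ ^ 2 * hc2
  have hu : u ^ 2 < 1 := by
    have : 0 < 1 - u ^ 2 := by rw [h1u]; positivity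
    linarith
  have hu_ne : u ≠ -1 ∧ u ≠ 1 := by
    constructor <;> rintro hu' <;> rw [hu'] at hu <;> norm_num at hu
  have hdu : HasDerivAt (fun θ ↦ (p * cos θ - a) / (p - a * cos θ))
      ((-(p * sin θ) * D - (p * cos θ - a) * (a * sin θ)) / D ^ 2) θ := by
    have hnum := ((hasDerivAt_cos θ).const_mul p).sub_const a
    have hden := ((hasDerivAt_cos θ).const_mul a).const_sub p
    refine (hnum.div hden hD.ne').congr_deriv ?_
    ring
  refine (((hasDerivAt_arccos hu_ne.1 hu_ne.2).comp θ hdu).div_const _).congr_deriv ?_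
  rw [h1u, sqrt_sq (by positivity)]
  field_simp
  linear_combination p * hD_def - hc2

theorem integral_inv_sub_mul_cos {p a : ℝ} (h : |a| < p) :
    ∫ θ in 0..π, (p - a * cos θ)⁻¹ = π / √(p ^ 2 - a ^ 2) := by
  have hpa : p + a ≠ 0 := by linarith [neg_abs_le a]
  have hD : Continuous fun θ ↦ p - a * cos θ := by fun_prop
  have hD_ne θ : p - a * cos θ ≠ 0 := (sub_mul_cos_pos h θ).ne'
  have hF : Continuous fun θ ↦ arccos ((p * cos θ - a) / (p - a * cos θ)) / √(p ^ 2 - a ^ 2) :=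
    (continuous_arccos.comp ((by fun_prop : Continuous fun θ ↦ p * cos θ - a).div hD hD_ne)
      ).div_const _
  rw [intervalIntegral.integral_eq_sub_of_hasDerivAt_of_le pi_pos.le hF.continuousOn
    (fun θ hθ ↦ hasDerivAt_arccos_div_sub_mul_cos h hθ)
    ((hD.inv₀ hD_ne).intervalIntegrable _ _)]
  have hπ : (p * cos π - a) / (p - a * cos π) = -1 := by
    rw [cos_pi, div_eq_iff (by rwa [mul_neg_one, sub_neg_eq_add])]; ring
  have h0 : (p * cos 0 - a) / (p - a * cos 0) = 1 := by
    rw [cos_zero, mul_one, mul_one, div_self (by linarith [le_abs_self a])]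
  simp only [hπ, h0, arccos_neg_one, arccos_one, zero_div, sub_zero]

theorem integral_exp_neg_mul_Ioi_zero {b : ℝ} (hb : 0 < b) :
    ∫ l in Ioi 0, exp (-(b * l)) = b⁻¹ := by
  simp_rw [← neg_mul]
  rw [integral_exp_mul_Ioi (neg_neg_of_pos hb), mul_zero, exp_zero, div_neg, neg_div, neg_neg,
    one_div]

lemma exp_neg_mul_mul_I0 (p a l : ℝ) :
    exp (-p * l) * I0 (a * l) = π⁻¹ * ∫ θ in 0..π, exp (-((p - a * cos θ) * l)) := by
  rw [I0, one_div, mul_left_comm, ← intervalIntegral.integral_const_mul]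
  congr 2 with θ
  rw [← exp_add]
  ring_nf

lemma integrable_exp_neg_mul_sub_mul_cos {p a : ℝ} (h : |a| < p) :
    Integrable (Function.uncurry fun θ l ↦ exp (-((p - a * cos θ) * l)))
      ((volume.restrict (uIoc 0 π)).prod (volume.restrict (Ioi 0))) := by
  rw [uIoc_of_le pi_pos.le]
  refine ((integrableOn_exp_mul_Ioi (sub_neg.2 h) 0).comp_snd _).mono' (by fun_prop) ?_
  rw [Measure.prod_restrict]
  refine (ae_restrict_iff' (measurableSet_Ioc.prod measurableSet_Ioi)).2 (ae_of_all _ ?_)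
  rintro ⟨θ, l⟩ ⟨-, hl : 0 < l⟩
  rw [Function.uncurry_apply_pair, norm_of_nonneg (exp_nonneg _), exp_le_exp]
  nlinarith [mul_cos_le_abs a θ]

theorem laplace_transform_I0 (p a : ℝ) (ha : 0 ≤ a) (hpa : a < p) :
    ∫ l in Set.Ioi (0:ℝ), Real.exp (-p * l) * I0 (a * l)
      = 1 / Real.sqrt (p ^ 2 - a ^ 2) := by
  have h : |a| < p := by rwa [abs_of_nonneg ha]
  calc ∫ l in Ioi 0, exp (-p * l) * I0 (a * l)
      = ∫ l in Ioi 0, π⁻¹ * ∫ θ in 0..π, exp (-((p - a * cos θ) * l)) := by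
        simp_rw [exp_neg_mul_mul_I0]
    _ = π⁻¹ * ∫ θ in 0..π, ∫ l in Ioi 0, exp (-((p - a * cos θ) * l)) := by
        rw [integral_const_mul, intervalIntegral_integral_swap
          (integrable_exp_neg_mul_sub_mul_cos h)]
    _ = π⁻¹ * ∫ θ in 0..π, (p - a * cos θ)⁻¹ := by
        simp_rw [integral_exp_neg_mul_Ioi_zero (sub_mul_cos_pos h _)]
    _ = 1 / √(p ^ 2 - a ^ 2) := by
        rw [integral_inv_sub_mul_cos h, inv_mul_eq_div, div_div_cancel_left' pi_ne_zero, one_div]
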